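/- Let (G, A, B) be a graphic presentation of an isotropic system L and v ∈ V. (i) For every r ∈ F_q, the triple (G*_r v, A', B') is also a graphic presentation of L, where A' = A + r·B_v (i.e., A'(v) = A(v) + r·B(v) and A'(w) = A(w) for w ≠ v) and B' is given by B'(w) = B(w) + r·g_{vw}²·A(w) for all w ∈ V. (ii) For every nonzero s ∈ F_q, the triple (G∘_s v, A + (s⁻¹ − 1)·A_v, B + (s − 1)·B_v) is also a graphic presentation of L. -/

import Mathlib

open Matrix

section Defs

variable {F : Type} [Field F] {V : Type} [Fintype V] [DecidableEq V]

/-- The bilinear form on `K = F × F`: `⟨(x,y),(x',y')⟩ = x·y' − x'·y`. -/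
def formK (a b : F × F) : F := a.1 * b.2 - b.1 * a.2

/-- The bilinear form on `K^V`: `⟨A,A'⟩ = Σ_v ⟨A v, A' v⟩`. -/
def formKV (A B : V → F × F) : F := ∑ v, formK (A v) (B v)

/-- An isotropic system: an `n`-dimensional subspace of `K^V` on which the form vanishes. -/
def IsIsotropic (L : Submodule F (V → F × F)) : Prop :=
  Module.finrank F L = Fintype.card V ∧ ∀ A ∈ L, ∀ B ∈ L, formKV A B = 0

/-- A labeled graph on `V` over `F`: a symmetric matrix with zero diagonal. -/
def IsLGraph (G : Matrix V V F) : Prop := G.IsSymm ∧ ∀ v, G v v = 0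

/-- The `2n × 2n` matrix `D(A,B)` with four diagonal blocks
`[[diag Z, diag T],[diag X, diag Y]]` where `A = (X,Y)`, `B = (Z,T)`. -/
def Dmat (A B : V → F × F) : Matrix (V ⊕ V) (V ⊕ V) F :=
  fromBlocks (diagonal fun v => (B v).1) (diagonal fun v => (B v).2)
    (diagonal fun v => (A v).1) (diagonal fun v => (A v).2)

/-- The diagonal entries of `det D(A,B) = (diag Z)(diag Y) − (diag X)(diag T)`. -/
def detD (A B : V → F × F) (v : V) : F := (B v).1 * (A v).2 - (A v).1 * (B v).2

/-- The `v`-th row of the `n × 2n` matrix `(I | G) · D(A,B)` viewed as a vector in `K^V`. -/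
def presRow (G : Matrix V V F) (A B : V → F × F) (v : V) : V → F × F :=
  fun w => ((fromCols (1 : Matrix V V F) G * Dmat A B) v (Sum.inl w),
            (fromCols (1 : Matrix V V F) G * Dmat A B) v (Sum.inr w))

/-- `(G, A, B)` is a graphic presentation of the isotropic system `L`:
`G` is a labeled graph, `det D(A,B) = c·I` with `c ≠ 0`, and the rows of
`(I | G)·D(A,B)` form a basis of `L`. -/
def IsGraphicPresentation (L : Submodule F (V → F × F)) (G : Matrix V V F)
    (A B : V → F × F) : Prop :=
  IsLGraph G ∧ (∃ c : F, c ≠ 0 ∧ ∀ v, detD A B v = c) ∧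
  LinearIndependent F (presRow G A B) ∧
  Submodule.span F (Set.range (presRow G A B)) = L

/-- `G` is a fundamental graph of `L`. -/
def IsFundamental (L : Submodule F (V → F × F)) (G : Matrix V V F) : Prop :=
  ∃ A B, IsGraphicPresentation L G A B

/-- The local complementation operation `G *_r v`. -/
def starOp (G : Matrix V V F) (r : F) (v : V) : Matrix V V F :=
  Matrix.of fun u w => if u = v ∨ w = v ∨ u = w then G u w else G u w + r * G v u * G v w

/-- The operation `G ∘_s v`, multiplying the edges at `v` by `s`. -/
def circOp (G : Matrix V V F) (s : F) (v : V) : Matrix V V F :=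
  Matrix.of fun u w => if u = v ∨ w = v then s * G u w else G u w

/-- One local operation. -/
def LocalStep (G H : Matrix V V F) : Prop :=
  (∃ v r, H = starOp G r v) ∨ (∃ v s, s ≠ (0 : F) ∧ H = circOp G s v)

/-- Two labeled graphs are locally equivalent if one is obtained from the other by a
finite sequence of operations `*_r v` and `∘_s v`. -/
def LocallyEquivalent (G H : Matrix V V F) : Prop :=
  Relation.ReflTransGen LocalStep G H

/-- A complete vector: all coordinates nonzero. -/
def CompleteVec (A : V → F × F) : Prop := ∀ v, A v ≠ 0

/-- `E_{v,x}`: the vector equal to `x` at `v` and `0` elsewhere. -/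
def Ev (v : V) (x : F × F) : V → F × F := fun w => if w = v then x else 0

/-- `Â`: the span of the vectors `A_v = E_{v, A v}`. -/
def hatSub (A : V → F × F) : Submodule F (V → F × F) :=
  Submodule.span F (Set.range fun v => Ev v (A v))

/-- An Eulerian vector of `L`: a complete vector with `Â ∩ L = 0`. -/
def IsEulerian (L : Submodule F (V → F × F)) (A : V → F × F) : Prop :=
  CompleteVec A ∧ hatSub A ⊓ L = ⊥

/-- `ε(L)`: the number of Eulerian vectors of `L`. -/
noncomputable def eulerCount (L : Submodule F (V → F × F)) : ℕ :=
  Set.ncard {A | IsEulerian L A}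

/-- The number of pairs `(A,B)` such that `(G,A,B)` is a graphic presentation of `L`. -/
noncomputable def lamCount (L : Submodule F (V → F × F)) (G : Matrix V V F) : ℕ :=
  Set.ncard {p : (V → F × F) × (V → F × F) | IsGraphicPresentation L G p.1 p.2}

/-- The number of graphic presentations (triples `(G,A,B)`) of `L`. -/
noncomputable def presCount (L : Submodule F (V → F × F)) : ℕ :=
  Set.ncard {t : Matrix V V F × (V → F × F) × (V → F × F) |
    IsGraphicPresentation L t.1 t.2.1 t.2.2}

/-- `l(G)`: the number of labeled graphs locally equivalent to `G`. -/
noncomputable def locCount (G : Matrix V V F) : ℕ :=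
  Set.ncard {H | LocallyEquivalent G H}

/-- Connectivity of a labeled graph: the simple graph with edges `{v,w}` with
`g_{vw} ≠ 0` is connected. -/
def GraphConnected (G : Matrix V V F) : Prop :=
  (SimpleGraph.fromRel fun v w => G v w ≠ 0).Connected

end Defs

variable {F : Type} [Field F] [Fintype F] {V : Type} [Fintype V] [DecidableEq V] [Nonempty V]


set_option linter.unusedSectionVars false
set_option linter.unreachableTactic false
set_option linter.unusedTactic false
set_option maxHeartbeats 1000000
section AuxLemmas

variable {F : Type} [Field F] {V : Type} [Fintype V] [DecidableEq V]

lemma presRow_apply (G : Matrix V V F) (A B : V → F × F) (u w : V) :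
    presRow G A B u w = ((if u = w then (B w).1 else 0) + G u w * (A w).1,
      (if u = w then (B w).2 else 0) + G u w * (A w).2) := by
  simp [presRow, Dmat, Matrix.mul_apply, Fintype.sum_sum_type, fromCols, fromBlocks,
    diagonal, one_apply, Finset.sum_ite_eq, mul_ite, ite_mul, mul_zero, zero_mul]

variable {ι : Type} [Fintype ι] [DecidableEq ι] {M : Type} [AddCommGroup M] [Module F M]

lemma li_add_smul (f : ι → M) (v : ι) (d : ι → F) (hdv : d v = 0)
    (hf : LinearIndependent F f) :
    LinearIndependent F (fun u => f u + d u • f v) := by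
  rw [Fintype.linearIndependent_iff] at hf ⊢
  intro g hg
  set S := ∑ w, g w * d w with hS
  have expand : ∑ u, g u • (f u + d u • f v) = (∑ u, g u • f u) + S • f v := by
    simp only [smul_add, Finset.sum_add_distrib, smul_smul]
    rw [← Finset.sum_smul]
  have key : ∑ u, (g u + (if u = v then S else 0)) • f u = 0 := by
    simp only [add_smul, Finset.sum_add_distrib, ite_smul, zero_smul,
      Finset.sum_ite_eq', Finset.mem_univ, if_true]
    rw [← expand, hg]
  have h0 := hf _ key
  have hne : ∀ u, u ≠ v → g u = 0 := by
    intro u hu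
    have := h0 u
    simpa [hu] using this
  have hSz : S = 0 := by
    rw [hS]
    apply Finset.sum_eq_zero
    intro w _
    by_cases hw : w = v
    · simp [hw, hdv]
    · simp [hne w hw]
  intro u
  by_cases hu : u = v
  · have := h0 u
    simpa [hu, hSz] using this
  · exact hne u hu

lemma span_add_smul (f : ι → M) (v : ι) (d : ι → F) (hdv : d v = 0) :
    Submodule.span F (Set.range fun u => f u + d u • f v)
      = Submodule.span F (Set.range f) := by
  apply le_antisymm <;> rw [Submodule.span_le] <;> rintro _ ⟨u, rfl⟩
  · exact Submodule.add_mem _ (Submodule.subset_span ⟨u, rfl⟩)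
      (Submodule.smul_mem _ _ (Submodule.subset_span ⟨v, rfl⟩))
  · have : f u = (f u + d u • f v) - d u • (f v + d v • f v) := by
      simp [hdv]
    rw [this]
    exact Submodule.sub_mem _ (Submodule.subset_span ⟨u, rfl⟩)
      (Submodule.smul_mem _ _ (Submodule.subset_span ⟨v, rfl⟩))

lemma li_unit_smul (f : ι → M) (c : ι → F) (hc : ∀ u, c u ≠ 0)
    (hf : LinearIndependent F f) : LinearIndependent F (fun u => c u • f u) := by
  rw [Fintype.linearIndependent_iff] at hf ⊢
  intro g hg u
  have := hf (fun u => g u * c u) (by simpa [smul_smul] using hg) u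
  exact (mul_eq_zero.mp this).resolve_right (hc u)

lemma span_unit_smul (f : ι → M) (c : ι → F) (hc : ∀ u, c u ≠ 0) :
    Submodule.span F (Set.range fun u => c u • f u) = Submodule.span F (Set.range f) := by
  apply le_antisymm <;> rw [Submodule.span_le] <;> rintro _ ⟨u, rfl⟩
  · exact Submodule.smul_mem _ _ (Submodule.subset_span ⟨u, rfl⟩)
  · have : f u = (c u)⁻¹ • (c u • f u) := by
      rw [smul_smul, inv_mul_cancel₀ (hc u), one_smul]
    rw [this]
    exact Submodule.smul_mem _ _ (Submodule.subset_span ⟨u, rfl⟩)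

end AuxLemmas

/-- Switching in terms of local complementation: graphic presentations obtained
from `(G,A,B)` by the operations `*_r v` and `∘_s v`. -/
theorem graphicPresentation_localOps (hchar : ringChar F ≠ 2)
    (L : Submodule F (V → F × F)) (hL : IsIsotropic L)
    (G : Matrix V V F) (A B : V → F × F)
    (hpres : IsGraphicPresentation L G A B) (v : V) :
    (∀ r : F, IsGraphicPresentation L (starOp G r v)
        (A + r • Ev v (B v)) (fun w => B w + (r * (G v w) ^ 2) • A w)) ∧
    (∀ s : F, s ≠ 0 → IsGraphicPresentation L (circOp G s v)
        (A + (s⁻¹ - 1) • Ev v (A v)) (B + (s - 1) • Ev v (B v))) := by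
  obtain ⟨⟨hsymm, hdiag⟩, ⟨c, hc, hcd⟩, hli, hspan⟩ := hpres
  have hGsym : ∀ a b, G a b = G b a := fun a b => hsymm.apply b a
  have hcd' : ∀ w, (B w).1 * (A w).2 - (A w).1 * (B w).2 = c := fun w => hcd w
  constructor
  · intro r
    have hrow : presRow (starOp G r v) (A + r • Ev v (B v))
        (fun w => B w + (r * (G v w) ^ 2) • A w)
        = fun u => presRow G A B u + (if u = v then (0:F) else r * G u v) • presRow G A B v := by
      funext u w
      simp only [presRow_apply, starOp, of_apply, Pi.add_apply, Pi.smul_apply, Ev,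
        Prod.smul_mk, smul_eq_mul, Prod.mk_add_mk, Prod.mk.injEq, Prod.fst_add, Prod.snd_add,
        Prod.smul_fst, Prod.smul_snd, apply_ite Prod.fst, apply_ite Prod.snd,
        Prod.fst_zero, Prod.snd_zero]
      by_cases huv : u = v <;> by_cases hwv : w = v <;> by_cases huw : u = w <;>
        simp_all [hdiag] <;>
        (try simp only [if_neg (Ne.symm hwv)]) <;>
        (try rw [hGsym v u]) <;> (try rw [hGsym v w]) <;>
        first
          | exact ⟨trivial, trivial⟩
          | (constructor <;> ring1)
          | ring1
    refine ⟨⟨?_, ?_⟩, ⟨c, hc, ?_⟩, ?_, ?_⟩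
    · rw [Matrix.IsSymm]
      ext i j
      simp only [transpose_apply, starOp, of_apply]
      by_cases h1 : i = v <;> by_cases h2 : j = v <;> by_cases h3 : i = j <;>
        simp_all <;>
        first
          | exact hGsym j i
          | ring1
          | (rw [hGsym j i]; ring1)
          | (rw [if_neg (Ne.symm h3)]; ring1)
    · intro u
      simp [starOp, hdiag]
    · intro w
      by_cases hwv : w = v
      · subst hwv
        simp [detD, Ev, hdiag]
        linear_combination hcd' w
      · simp [detD, Ev, hwv, Ne.symm hwv]
        linear_combination hcd' w
    · rw [hrow]
      exact li_add_smul _ v _ (by simp) hli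
    · rw [hrow, span_add_smul _ v _ (by simp)]
      exact hspan
  · intro s hs
    have hss : s * s⁻¹ = 1 := mul_inv_cancel₀ hs
    have hrow : presRow (circOp G s v) (A + (s⁻¹ - 1) • Ev v (A v))
        (B + (s - 1) • Ev v (B v))
        = fun u => (if u = v then s else (1:F)) • presRow G A B u := by
      funext u w
      simp only [presRow_apply, circOp, of_apply, Pi.add_apply, Pi.smul_apply, Ev,
        Prod.smul_mk, smul_eq_mul, Prod.mk_add_mk, Prod.mk.injEq, Prod.fst_add, Prod.snd_add,
        Prod.smul_fst, Prod.smul_snd, apply_ite Prod.fst, apply_ite Prod.snd,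
        Prod.fst_zero, Prod.snd_zero]
      by_cases huv : u = v <;> by_cases hwv : w = v <;> by_cases huw : u = w <;>
        simp_all [hdiag] <;>
        (try simp only [if_neg (Ne.symm hwv)]) <;>
        first
          | exact ⟨trivial, trivial⟩
          | (constructor <;> ring1)
          | ring1
          | (constructor <;> field_simp <;> ring1)
          | (field_simp <;> ring1)
          | (constructor <;> field_simp)
          | field_simp
    refine ⟨⟨?_, ?_⟩, ⟨c, hc, ?_⟩, ?_, ?_⟩
    · rw [Matrix.IsSymm]
      ext i j
      simp only [transpose_apply, circOp, of_apply]
      by_cases h1 : i = v <;> by_cases h2 : j = v <;>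
        simp_all <;>
        (try first
          | exact hGsym j i
          | rw [hGsym j i])
    · intro u
      by_cases huv : u = v <;> simp [circOp, hdiag, huv]
    · intro w
      by_cases hwv : w = v
      · subst hwv
        simp [detD, Ev]
        linear_combination (s * s⁻¹) * hcd' w + c * hss
      · simp [detD, Ev, hwv, Ne.symm hwv]
        linear_combination hcd' w
    · rw [hrow]
      refine li_unit_smul _ _ (fun u => ?_) hli
      split <;> simp [hs]
    · rw [hrow, span_unit_smul _ _ (fun u => ?_)]
      · exact hspan
      · split <;> simp [hs]
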